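/- arXiv:2205.03741 — 2 statements merged into one kernel-verified Lean document; each statement's English description precedes it below -/
import Mathlib

section
/- Let H ∈ (0, 1/2], ρ, ν ∈ ℝ, and let ξ : [0, ∞) → ℝ be continuous and nonnegative with ξ(0) = V₀ > 0. Then lim_{T → 0⁺} T^(1/2 − H) · ( ρν / Γ(H + 3/2) ) · ( ∫_0^T ξ(s)(T − s)^(H + 1/2) ds ) / ( T ∫_0^T ξ(s) ds ) = ρν / Γ(H + 5/2). -/
open MeasureTheory intervalIntegral Filter Topology

lemma aux_int {p : ℝ} (hp : 0 ≤ p) (T : ℝ) :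
    ∫ s in (0:ℝ)..T, (T - s) ^ p = T ^ (p + 1) / (p + 1) := by
  rw [intervalIntegral.integral_comp_sub_left (fun x => x ^ p) T]
  simp only [sub_self, sub_zero]
  rw [integral_rpow (Or.inl (by linarith))]
  rw [Real.zero_rpow (by linarith : p + 1 ≠ 0)]
  ring

lemma tendsto_weighted (V₀ : ℝ) (ξ : ℝ → ℝ)
    (hξcont : ContinuousOn ξ (Set.Ici 0)) (hξ0 : ξ 0 = V₀)
    {p : ℝ} (hp : 0 ≤ p) :
    Tendsto (fun T => (∫ s in (0:ℝ)..T, ξ s * (T - s) ^ p) / T ^ (p + 1))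
      (𝓝[>] 0) (𝓝 (V₀ / (p + 1))) := by
  rw [Metric.tendsto_nhdsWithin_nhds]
  intro ε hε
  have hc : ContinuousWithinAt ξ (Set.Ici 0) 0 := hξcont 0 Set.self_mem_Ici
  rw [Metric.continuousWithinAt_iff] at hc
  obtain ⟨δ, hδ, hδ'⟩ := hc (ε / 2) (by linarith)
  refine ⟨δ, hδ, ?_⟩
  intro T hT hTδ
  have hT0 : (0:ℝ) < T := hT
  have hTδ' : T < δ := by
    rw [Real.dist_eq, sub_zero, abs_of_pos hT0] at hTδ; exact hTδ
  have hPpos : 0 < T ^ (p + 1) := Real.rpow_pos_of_pos hT0 _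
  have hgcont : Continuous (fun s : ℝ => (T - s) ^ p) :=
    (continuous_const.sub continuous_id).rpow_const (fun x => Or.inr hp)
  have hsub : Set.uIcc (0:ℝ) T ⊆ Set.Ici 0 := by
    rw [Set.uIcc_of_le hT0.le]; exact fun x hx => hx.1
  have hint1 : IntervalIntegrable (fun s => ξ s * (T - s) ^ p) volume 0 T :=
    ((hξcont.mono hsub).mul hgcont.continuousOn).intervalIntegrable
  have hint2 : IntervalIntegrable (fun s => V₀ * (T - s) ^ p) volume 0 T :=
    (continuous_const.mul hgcont).continuousOn.intervalIntegrable
  have hint3 : IntervalIntegrable (fun s => |ξ s - V₀| * (T - s) ^ p) volume 0 T :=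
    ((((hξcont.mono hsub).sub continuousOn_const).abs).mul
      hgcont.continuousOn).intervalIntegrable
  have hint4 : IntervalIntegrable (fun s => (ε / 2) * (T - s) ^ p) volume 0 T :=
    (continuous_const.mul hgcont).continuousOn.intervalIntegrable
  have key : |(∫ s in (0:ℝ)..T, ξ s * (T - s) ^ p) - V₀ * (T ^ (p + 1) / (p + 1))|
      ≤ ε / 2 * (T ^ (p + 1) / (p + 1)) := by
    have heq : (∫ s in (0:ℝ)..T, ξ s * (T - s) ^ p) - V₀ * (T ^ (p + 1) / (p + 1))
        = ∫ s in (0:ℝ)..T, (ξ s - V₀) * (T - s) ^ p := by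
      have h1 : (∫ s in (0:ℝ)..T, (ξ s - V₀) * (T - s) ^ p)
          = (∫ s in (0:ℝ)..T, ξ s * (T - s) ^ p)
            - ∫ s in (0:ℝ)..T, V₀ * (T - s) ^ p := by
        rw [← intervalIntegral.integral_sub hint1 hint2]
        congr 1; funext s; ring
      rw [h1, intervalIntegral.integral_const_mul, aux_int hp T]
    rw [heq]
    calc |∫ s in (0:ℝ)..T, (ξ s - V₀) * (T - s) ^ p|
        ≤ ∫ s in (0:ℝ)..T, |(ξ s - V₀) * (T - s) ^ p| :=
          intervalIntegral.abs_integral_le_integral_abs hT0.le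
      _ ≤ ∫ s in (0:ℝ)..T, (ε / 2) * (T - s) ^ p := by
          apply intervalIntegral.integral_mono_on hT0.le _ hint4
          · intro x hx
            rw [abs_mul, abs_of_nonneg (Real.rpow_nonneg (by linarith [hx.2] : (0:ℝ) ≤ T - x) p)]
            apply mul_le_mul_of_nonneg_right _
              (Real.rpow_nonneg (by linarith [hx.2]) p)
            have := hδ' hx.1 (by rw [Real.dist_eq, sub_zero, abs_of_nonneg hx.1]
                                 linarith [hx.2])
            rw [hξ0, Real.dist_eq] at this
            exact this.le
          · exact (((hξcont.mono hsub).sub continuousOn_const).mul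
              hgcont.continuousOn).intervalIntegrable.abs
      _ = ε / 2 * (T ^ (p + 1) / (p + 1)) := by
          rw [intervalIntegral.integral_const_mul, aux_int hp T]
  rw [Real.dist_eq]
  have heq2 : (∫ s in (0:ℝ)..T, ξ s * (T - s) ^ p) / T ^ (p + 1) - V₀ / (p + 1)
      = ((∫ s in (0:ℝ)..T, ξ s * (T - s) ^ p) - V₀ * (T ^ (p + 1) / (p + 1)))
        / T ^ (p + 1) := by
    field_simp
  rw [heq2, abs_div, abs_of_pos hPpos]
  rw [div_lt_iff₀ hPpos]
  calc |(∫ s in (0:ℝ)..T, ξ s * (T - s) ^ p) - V₀ * (T ^ (p + 1) / (p + 1))|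
      ≤ ε / 2 * (T ^ (p + 1) / (p + 1)) := key
    _ ≤ ε / 2 * T ^ (p + 1) := by
        apply mul_le_mul_of_nonneg_left _ (by linarith)
        rw [div_le_iff₀ (by linarith : (0:ℝ) < p + 1)]
        nlinarith [hPpos]
    _ < ε * T ^ (p + 1) := by nlinarith [hPpos]

/-- Short-dated limit of the at-the-money implied variance skew in the rough Heston
model (with `λ = 0`): for `H ∈ (0, 1/2]`, `ρ, ν ∈ ℝ` and a continuous nonnegative
forward variance curve `ξ` with `ξ(0) = V₀ > 0`,
`T^(1/2 - H) · (ρν/Γ(H + 3/2)) · (∫_0^T ξ(s)(T-s)^(H+1/2) ds) / (T ∫_0^T ξ(s) ds)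
  → ρν / Γ(H + 5/2)` as `T → 0⁺`. -/
theorem rough_heston_skew_limit
    (H ρ ν V₀ : ℝ) (hH0 : 0 < H) (hH : H ≤ 1 / 2)
    (ξ : ℝ → ℝ) (hξcont : ContinuousOn ξ (Set.Ici 0))
    (hξnonneg : ∀ s, 0 ≤ s → 0 ≤ ξ s) (hξ0 : ξ 0 = V₀) (hV₀ : 0 < V₀) :
    Tendsto
      (fun T => T ^ (1 / 2 - H) * (ρ * ν / Real.Gamma (H + 3 / 2)) *
        ((∫ s in (0 : ℝ)..T, ξ s * (T - s) ^ (H + 1 / 2)) /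
          (T * ∫ s in (0 : ℝ)..T, ξ s)))
      (𝓝[>] 0) (𝓝 (ρ * ν / Real.Gamma (H + 5 / 2))) := by
  set c := ρ * ν / Real.Gamma (H + 3 / 2) with hc
  have hA := tendsto_weighted V₀ ξ hξcont hξ0 (p := H + 1/2) (by linarith)
  have hB0 := tendsto_weighted V₀ ξ hξcont hξ0 (p := 0) le_rfl
  have hB : Tendsto (fun T => (∫ s in (0:ℝ)..T, ξ s) / T) (𝓝[>] 0) (𝓝 V₀) := by
    simpa [Real.rpow_zero, Real.rpow_one] using hB0
  have hlim := ((hA.div hB hV₀.ne').const_mul c)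
  have hval : c * (V₀ / (H + 1/2 + 1) / V₀) = ρ * ν / Real.Gamma (H + 5 / 2) := by
    have hG : Real.Gamma (H + 5/2) = (H + 3/2) * Real.Gamma (H + 3/2) := by
      rw [show H + 5/2 = (H + 3/2) + 1 by ring,
        Real.Gamma_add_one (by linarith : H + 3/2 ≠ 0)]
    have hGpos : 0 < Real.Gamma (H + 3/2) := Real.Gamma_pos_of_pos (by linarith)
    rw [hc, hG]
    have h32 : H + 1/2 + 1 = H + 3/2 := by ring
    rw [h32]
    field_simp
  have : Tendsto
      (fun T => c * ((∫ s in (0:ℝ)..T, ξ s * (T - s) ^ (H + 1/2)) / T ^ (H + 1/2 + 1)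
        / ((∫ s in (0:ℝ)..T, ξ s) / T)))
      (𝓝[>] 0) (𝓝 (ρ * ν / Real.Gamma (H + 5 / 2))) := by
    rw [← hval]; exact hlim
  apply this.congr'
  filter_upwards [self_mem_nhdsWithin] with T hT
  have hT0 : (0:ℝ) < T := hT
  set N := ∫ s in (0:ℝ)..T, ξ s * (T - s) ^ (H + 1/2) with hN
  set D := ∫ s in (0:ℝ)..T, ξ s with hD
  have hb : (0:ℝ) < T ^ (H + 1/2 + 1) := Real.rpow_pos_of_pos hT0 _
  have hT2 : T ^ (1/2 - H) * T ^ (H + 1/2 + 1) = T * T := by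
    rw [← Real.rpow_add hT0, show (1/2 - H) + (H + 1/2 + 1) = ((2:ℕ):ℝ) by push_cast; ring,
      Real.rpow_natCast]
    ring
  obtain ⟨a, ha⟩ : ∃ a, T ^ (1/2 - H) = a := ⟨_, rfl⟩
  obtain ⟨b, hb'⟩ : ∃ b, T ^ (H + 1/2 + 1) = b := ⟨_, rfl⟩
  rw [ha, hb'] at hT2
  rw [hb'] at hb
  rw [ha, hb']
  rcases eq_or_ne D 0 with hDz | hDz
  · simp [hDz, mul_comm]
  · field_simp
    linear_combination (-1 * ρ * ν * (Real.Gamma (H + 3 / 2))⁻¹ * N) * hT2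
end

section
/- Let 0 < γ < 1/2, let η ∈ ℝ with η ≠ 0, let t < T be real numbers, and let ξ : [t, T] → ℝ be continuous and nonnegative. Then ∫_t^T ∫_s^T ∫_r^T 2η² ξ(r) ξ(u) (r − s)^(−γ) (u − s)^(−γ) exp( η² ∫_t^s (r − v)^(−γ)(u − v)^(−γ) dv ) du dr ds = 2 ∫_t^T ξ(u) ∫_t^u ξ(r) [ exp( η² ∫_t^r (r − v)^(−γ)(u − v)^(−γ) dv ) − 1 ] dr du. -/
/-!
Write `K(r, u, v) = (r - v)^(-γ) (u - v)^(-γ)`. For fixed `r ≤ u`, the integrand, as a function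
of `s`, is `2 ξ(r) ξ(u)` times the derivative of `s ↦ exp (η² ∫_t^s K(r, u, v) dv)`, so integrating
`s` over `[t, r]` gives `2 ξ(r) ξ(u) (exp (η² ∫_t^r K(r, u, v) dv) - 1)`. The triple integral runs
over the simplex `t ≤ s ≤ r ≤ u ≤ T`, and three Fubini swaps over triangles reorder it so that `s`
is innermost and `u` outermost. Every swap is justified by the bound
`|integrand| ≤ M (r - s)^(-2γ)`, which is integrable because `2γ < 1`.
-/

open MeasureTheory intervalIntegral Set Real Function

section Fubini

variable {E : Type*} [NormedAddCommGroup E]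

def triangle (a b : ℝ) : Set (ℝ × ℝ) := {p | a ≤ p.1 ∧ p.1 ≤ p.2 ∧ p.2 ≤ b}

theorem measurableSet_triangle (a b : ℝ) : MeasurableSet (triangle a b) :=
  (measurableSet_le measurable_const measurable_fst).inter
    ((measurableSet_le measurable_fst measurable_snd).inter
      (measurableSet_le measurable_snd measurable_const))

theorem triangle_subset_Icc_prod (a b : ℝ) : triangle a b ⊆ Icc a b ×ˢ Icc a b :=
  fun _ ⟨h₁, h₂, h₃⟩ => ⟨⟨h₁, h₂.trans h₃⟩, h₁.trans h₂, h₃⟩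

theorem integral_indicator_Icc [NormedSpace ℝ E] {f : ℝ → E} {a b : ℝ} (hab : a ≤ b) :
    ∫ x, (Icc a b).indicator f x = ∫ x in a..b, f x := by
  rw [MeasureTheory.integral_indicator measurableSet_Icc, integral_Icc_eq_integral_Ioc,
    integral_of_le hab]

theorem integral_integral_swap_triangle [NormedSpace ℝ E] {a b : ℝ} (hab : a ≤ b) {F : ℝ → ℝ → E}
    (hF : IntegrableOn (uncurry F) (triangle a b)) :
    ∫ x in a..b, ∫ y in x..b, F x y = ∫ y in a..b, ∫ x in a..y, F x y := by
  set Φ := (triangle a b).indicator (uncurry F)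
  have hΦ : Integrable (uncurry fun x y => Φ (x, y)) (volume.prod volume) := by
    rw [← Measure.volume_eq_prod]
    exact (integrable_indicator_iff (measurableSet_triangle a b)).2 hF
  have hrow : ∀ x y, Φ (x, y) = (Icc a b).indicator (fun x => (Icc x b).indicator (F x) y) x := by
    intro x y
    simp only [Φ, indicator_apply, triangle, mem_ofPred_eq, mem_Icc, uncurry_apply_pair]
    split_ifs <;> grind
  have hcol : ∀ x y, Φ (x, y) =
      (Icc a b).indicator (fun y => (Icc a y).indicator (fun x => F x y) x) y := by
    intro x y
    simp only [Φ, indicator_apply, triangle, mem_ofPred_eq, mem_Icc, uncurry_apply_pair]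
    split_ifs <;> grind
  calc ∫ x in a..b, ∫ y in x..b, F x y = ∫ x, ∫ y, Φ (x, y) := by
        simp_rw [hrow, integral_indicator₂, integral_indicator_Icc hab]
        refine integral_congr fun x hx => ?_
        rw [uIcc_of_le hab] at hx
        exact (integral_indicator_Icc hx.2).symm
    _ = ∫ y, ∫ x, Φ (x, y) := integral_integral_swap hΦ
    _ = ∫ y in a..b, ∫ x in a..y, F x y := by
        simp_rw [hcol, integral_indicator₂, integral_indicator_Icc hab]
        refine integral_congr fun y hy => ?_
        rw [uIcc_of_le hab] at hy
        exact integral_indicator_Icc hy.1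

theorem IntegrableOn.triangle_comp_fst {ψ : ℝ → E} {a b : ℝ} (hψ : IntegrableOn ψ (Icc a b)) :
    IntegrableOn (fun p : ℝ × ℝ => ψ p.1) (triangle a b) := by
  refine IntegrableOn.mono_set ?_ (triangle_subset_Icc_prod a b)
  rw [IntegrableOn, Measure.volume_eq_prod, ← Measure.prod_restrict]
  exact hψ.comp_fst _

theorem IntegrableOn.triangle_comp_sub {φ : ℝ → E} {a b : ℝ}
    (hφ : IntegrableOn φ (Icc 0 (b - a))) :
    IntegrableOn (fun p : ℝ × ℝ => φ (p.2 - p.1)) (triangle a b) := by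
  have hrect : IntegrableOn (fun q : ℝ × ℝ => φ q.2) (Icc a b ×ˢ Icc 0 (b - a)) := by
    rw [IntegrableOn, Measure.volume_eq_prod, ← Measure.prod_restrict]
    exact hφ.comp_snd _
  have hshear := measurePreserving_prod_sub (volume : Measure ℝ) volume
  rw [← Measure.volume_eq_prod] at hshear
  refine ((hshear.integrableOn_comp_preimage
    (MeasurableEquiv.shearSubRight ℝ).measurableEmbedding).2 hrect).mono_set ?_
  exact fun p ⟨h₁, h₂, h₃⟩ => ⟨⟨h₁, h₂.trans h₃⟩, sub_nonneg.2 h₂, by linarith⟩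

theorem StronglyMeasurable.intervalIntegral_prod_right [NormedSpace ℝ E] {α : Type*}
    [MeasurableSpace α] {f : α → ℝ → E} (hf : StronglyMeasurable (uncurry f)) {a b : α → ℝ}
    (ha : Measurable a) (hb : Measurable b) :
    StronglyMeasurable fun x => ∫ v in a x..b x, f x v := by
  have hIoc : ∀ {a b : α → ℝ}, Measurable a → Measurable b →
      StronglyMeasurable fun x => ∫ v in Ioc (a x) (b x), f x v := by
    intro a b ha hb
    have hS : MeasurableSet {p : α × ℝ | p.2 ∈ Ioc (a p.1) (b p.1)} :=
      (measurableSet_lt (ha.comp measurable_fst) measurable_snd).inter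
        (measurableSet_le measurable_snd (hb.comp measurable_fst))
    simp_rw [← MeasureTheory.integral_indicator measurableSet_Ioc]
    exact (hf.indicator hS).integral_prod_right'
  exact (hIoc ha hb).sub (hIoc hb ha)

end Fubini

theorem integral_mul_exp_integral {g : ℝ → ℝ} {a b : ℝ} (hab : a ≤ b)
    (hg : IntervalIntegrable g volume a b) (hcont : ContinuousOn g (Ioo a b)) :
    ∫ x in a..b, g x * exp (∫ y in a..x, g y) = exp (∫ x in a..b, g x) - 1 := by
  have hprim : ContinuousOn (fun x => ∫ y in a..x, g y) (Icc a b) := by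
    simpa [uIcc_of_le hab] using continuousOn_primitive_interval' hg left_mem_uIcc
  have hderiv : ∀ x ∈ Ioo a b,
      HasDerivAt (fun x => exp (∫ y in a..x, g y)) (g x * exp (∫ y in a..x, g y)) x := by
    intro x hx
    have hgx : IntervalIntegrable g volume a x :=
      hg.mono_set (uIcc_subset_uIcc_left (by rw [uIcc_of_le hab]; exact Ioo_subset_Icc_self hx))
    refine ((integral_hasDerivAt_right hgx
      (hcont.stronglyMeasurableAtFilter isOpen_Ioo x hx)
      (hcont.continuousAt (Ioo_mem_nhds hx.1 hx.2))).exp).congr_deriv (mul_comm _ _)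
  have hint : IntervalIntegrable (fun x => g x * exp (∫ y in a..x, g y)) volume a b :=
    hg.mul_continuousOn (by rw [uIcc_of_le hab]; exact continuous_exp.comp_continuousOn hprim)
  rw [integral_eq_sub_of_hasDerivAt_of_le hab
    (continuous_exp.comp_continuousOn hprim) hderiv hint]
  simp

theorem intervalIntegrable_rpow_const_sub {e : ℝ} (he : -1 < e) (c a b : ℝ) :
    IntervalIntegrable (fun v => (c - v) ^ e) volume a b := by
  simpa using (intervalIntegrable_rpow' he).comp_sub_left c (a := c - a) (b := c - b)

theorem intervalIntegrable_rpow_sub_const {e : ℝ} (he : -1 < e) (c a b : ℝ) :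
    IntervalIntegrable (fun v => (v - c) ^ e) volume a b := by
  simpa using (intervalIntegrable_rpow' he).comp_sub_right c (a := a - c) (b := b - c)

theorem integral_rpow_le_of_subset {e : ℝ} (he : -1 < e) {a b L : ℝ} (ha : 0 ≤ a) (hab : a ≤ b)
    (hbL : b ≤ L) : ∫ x in a..b, x ^ e ≤ ∫ x in 0..L, x ^ e :=
  integral_mono_interval ha hab hbL
    (ae_restrict_of_forall_mem measurableSet_Ioc fun _ hx => rpow_nonneg hx.1.le e)
    (intervalIntegrable_rpow' he)

section Kernel

variable {γ : ℝ}

noncomputable def covKernel (γ r u v : ℝ) : ℝ := (r - v) ^ (-γ) * (u - v) ^ (-γ)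

theorem covKernel_nonneg {r u v : ℝ} (hvr : v ≤ r) (hru : r ≤ u) : 0 ≤ covKernel γ r u v :=
  mul_nonneg (rpow_nonneg (sub_nonneg.2 hvr) _) (rpow_nonneg (by linarith) _)

theorem covKernel_le (hγ : 0 < γ) {r u v : ℝ} (hvr : v ≤ r) (hru : r ≤ u) :
    covKernel γ r u v ≤ (r - v) ^ (-(2 * γ)) := by
  rcases hvr.eq_or_lt with rfl | hvr
  -- at `v = r` both sides vanish, by the convention `0 ^ x = 0` for `x ≠ 0`
  · simp [covKernel, zero_rpow (neg_ne_zero.2 hγ.ne'), zero_rpow (by linarith : -(2 * γ) ≠ 0)]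
  have hrv : 0 < r - v := sub_pos.2 hvr
  calc covKernel γ r u v ≤ (r - v) ^ (-γ) * (r - v) ^ (-γ) :=
        mul_le_mul_of_nonneg_left (rpow_le_rpow_of_nonpos hrv (by linarith) (by linarith))
          (rpow_nonneg hrv.le _)
    _ = (r - v) ^ (-(2 * γ)) := by rw [← rpow_add hrv]; ring_nf

theorem continuousOn_covKernel {r u : ℝ} (hru : r ≤ u) : ContinuousOn (covKernel γ r u) (Iio r) :=
  (ContinuousOn.rpow_const (by fun_prop) fun _ hv => Or.inl (sub_ne_zero.2 (ne_of_gt hv))).mul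
    (ContinuousOn.rpow_const (by fun_prop) fun _ hv =>
      Or.inl (sub_ne_zero.2 (ne_of_gt (lt_of_lt_of_le hv hru))))

theorem intervalIntegrable_covKernel (hγ0 : 0 < γ) (hγ : γ < 1 / 2) {a b r u : ℝ} (hab : a ≤ b)
    (hbr : b ≤ r) (hru : r ≤ u) : IntervalIntegrable (covKernel γ r u) volume a b := by
  refine (intervalIntegrable_rpow_const_sub (e := -(2 * γ)) (by linarith) r a b).mono_fun
    (by unfold covKernel; fun_prop) ?_
  rw [uIoc_of_le hab]
  refine ae_restrict_of_forall_mem measurableSet_Ioc fun v hv => ?_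
  dsimp only
  rw [norm_of_nonneg (covKernel_nonneg (hv.2.trans hbr) hru),
    norm_of_nonneg (rpow_nonneg (by linarith [hv.2]) _)]
  exact covKernel_le hγ0 (hv.2.trans hbr) hru

theorem integral_covKernel_le (hγ0 : 0 < γ) (hγ : γ < 1 / 2) {t s r u T : ℝ} (hts : t ≤ s)
    (hsr : s ≤ r) (hru : r ≤ u) (hrT : r ≤ T) :
    ∫ v in t..s, covKernel γ r u v ≤ ∫ x in 0..T - t, x ^ (-(2 * γ)) :=
  calc ∫ v in t..s, covKernel γ r u v ≤ ∫ v in t..s, (r - v) ^ (-(2 * γ)) :=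
        integral_mono_on hts (intervalIntegrable_covKernel hγ0 hγ hts hsr hru)
          (intervalIntegrable_rpow_const_sub (by linarith) r t s)
          fun v hv => covKernel_le hγ0 (hv.2.trans hsr) hru
    _ = ∫ x in r - s..r - t, x ^ (-(2 * γ)) :=
        integral_comp_sub_left (fun x => x ^ (-(2 * γ))) r
    _ ≤ ∫ x in 0..T - t, x ^ (-(2 * γ)) :=
        integral_rpow_le_of_subset (by linarith) (by linarith) (by linarith) (by linarith)

end Kernel

section Integrand

variable {γ η t T B : ℝ} {ξ : ℝ → ℝ}

noncomputable def tripleIntegrand (γ η t : ℝ) (ξ : ℝ → ℝ) (s r u : ℝ) : ℝ :=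
  2 * η ^ 2 * ξ r * ξ u * (r - s) ^ (-γ) * (u - s) ^ (-γ) *
    exp (η ^ 2 * ∫ v in t..s, covKernel γ r u v)

theorem tripleIntegrand_eq (s r u : ℝ) :
    tripleIntegrand γ η t ξ s r u = 2 * ξ r * ξ u *
      (η ^ 2 * covKernel γ r u s * exp (∫ v in t..s, η ^ 2 * covKernel γ r u v)) := by
  rw [tripleIntegrand, covKernel, intervalIntegral.integral_const_mul]; ring

theorem measurable_tripleIntegrand (hξ : Measurable ξ) :
    Measurable fun p : ℝ × ℝ × ℝ => tripleIntegrand γ η t ξ p.1 p.2.1 p.2.2 := by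
  have hG : Measurable fun p : ℝ × ℝ × ℝ => ∫ v in t..p.1, covKernel γ p.2.1 p.2.2 v :=
    (StronglyMeasurable.intervalIntegral_prod_right
      (f := fun (p : ℝ × ℝ × ℝ) v => covKernel γ p.2.1 p.2.2 v)
      (by unfold covKernel; fun_prop : Measurable _).stronglyMeasurable
      measurable_const measurable_fst).measurable
  unfold tripleIntegrand
  fun_prop

theorem exists_abs_tripleIntegrand_le (hγ0 : 0 < γ) (hγ : γ < 1 / 2)
    (hB : ∀ x ∈ Icc t T, |ξ x| ≤ B) :
    ∃ M, 0 ≤ M ∧ ∀ s r u, t ≤ s → s ≤ r → r ≤ u → u ≤ T →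
      |tripleIntegrand γ η t ξ s r u| ≤ M * (r - s) ^ (-(2 * γ)) := by
  set A := ∫ x in 0..T - t, x ^ (-(2 * γ))
  refine ⟨2 * η ^ 2 * B ^ 2 * exp (η ^ 2 * A), by positivity, fun s r u hts hsr hru huT => ?_⟩
  have hK := covKernel_nonneg (γ := γ) hsr hru
  have hKle := covKernel_le hγ0 hsr hru
  have hξr := hB r ⟨hts.trans hsr, hru.trans huT⟩
  have hξu := hB u ⟨(hts.trans hsr).trans hru, huT⟩
  have hB0 : 0 ≤ B := (abs_nonneg _).trans hξr
  have hexp : exp (η ^ 2 * ∫ v in t..s, covKernel γ r u v) ≤ exp (η ^ 2 * A) :=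
    exp_le_exp.2 (mul_le_mul_of_nonneg_left
      (integral_covKernel_le hγ0 hγ hts hsr hru (hru.trans huT)) (sq_nonneg η))
  calc |tripleIntegrand γ η t ξ s r u|
      = 2 * η ^ 2 * (|ξ r| * |ξ u|) * covKernel γ r u s *
          exp (η ^ 2 * ∫ v in t..s, covKernel γ r u v) := by
        rw [tripleIntegrand, ← abs_of_nonneg hK, covKernel]
        simp only [abs_mul, abs_exp, abs_two, abs_pow, sq_abs]
        ring
    _ ≤ 2 * η ^ 2 * (B * B) * (r - s) ^ (-(2 * γ)) * exp (η ^ 2 * A) := by gcongr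
    _ = 2 * η ^ 2 * B ^ 2 * exp (η ^ 2 * A) * (r - s) ^ (-(2 * γ)) := by ring

theorem integrableOn_tripleIntegrand_left (hγ0 : 0 < γ) (hγ : γ < 1 / 2) (hξ : Measurable ξ)
    (hB : ∀ x ∈ Icc t T, |ξ x| ≤ B) {s : ℝ} (hts : t ≤ s) (hsT : s ≤ T) :
    IntegrableOn (uncurry fun r u => tripleIntegrand γ η t ξ s r u) (triangle s T) := by
  obtain ⟨M, -, hM⟩ := exists_abs_tripleIntegrand_le (η := η) hγ0 hγ hB
  have hdom : IntegrableOn (fun p : ℝ × ℝ => M * (p.1 - s) ^ (-(2 * γ))) (triangle s T) := by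
    refine IntegrableOn.triangle_comp_fst (ψ := fun r => M * (r - s) ^ (-(2 * γ))) ?_
    rw [← intervalIntegrable_iff_integrableOn_Icc_of_le hsT]
    exact (intervalIntegrable_rpow_sub_const (by linarith) s s T).const_mul M
  refine hdom.mono' ((measurable_tripleIntegrand hξ).comp
    (measurable_const.prodMk measurable_id)).aestronglyMeasurable ?_
  exact ae_restrict_of_forall_mem (measurableSet_triangle s T) fun p ⟨hsr, hru, huT⟩ =>
    (norm_eq_abs _).trans_le (hM _ _ _ hts hsr hru huT)

theorem integrableOn_tripleIntegrand_right (hγ0 : 0 < γ) (hγ : γ < 1 / 2) (hξ : Measurable ξ)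
    (hB : ∀ x ∈ Icc t T, |ξ x| ≤ B) {u : ℝ} (htu : t ≤ u) (huT : u ≤ T) :
    IntegrableOn (uncurry fun s r => tripleIntegrand γ η t ξ s r u) (triangle t u) := by
  obtain ⟨M, -, hM⟩ := exists_abs_tripleIntegrand_le (η := η) hγ0 hγ hB
  have hdom : IntegrableOn (fun p : ℝ × ℝ => M * (p.2 - p.1) ^ (-(2 * γ))) (triangle t u) := by
    refine IntegrableOn.triangle_comp_sub (φ := fun d => M * d ^ (-(2 * γ))) ?_
    rw [← intervalIntegrable_iff_integrableOn_Icc_of_le (sub_nonneg.2 htu)]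
    exact (intervalIntegrable_rpow' (by linarith)).const_mul M
  refine hdom.mono' ((measurable_tripleIntegrand hξ).comp
    (measurable_fst.prodMk (measurable_snd.prodMk measurable_const))).aestronglyMeasurable ?_
  exact ae_restrict_of_forall_mem (measurableSet_triangle t u) fun p ⟨hts, hsr, hru⟩ =>
    (norm_eq_abs _).trans_le (hM _ _ _ hts hsr hru huT)

theorem integrableOn_integral_tripleIntegrand (hγ0 : 0 < γ) (hγ : γ < 1 / 2)
    (hξ : Measurable ξ) (hB : ∀ x ∈ Icc t T, |ξ x| ≤ B) :
    IntegrableOn (uncurry fun s u => ∫ r in s..u, tripleIntegrand γ η t ξ s r u)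
      (triangle t T) := by
  obtain ⟨M, hM0, hM⟩ := exists_abs_tripleIntegrand_le (η := η) hγ0 hγ hB
  refine Measure.integrableOn_of_bounded (M := M * ∫ x in 0..T - t, x ^ (-(2 * γ)))
    ((measure_mono (triangle_subset_Icc_prod t T)).trans_lt
      (isCompact_Icc.prod isCompact_Icc).measure_lt_top).ne
    (StronglyMeasurable.intervalIntegral_prod_right
      (f := fun (p : ℝ × ℝ) r => tripleIntegrand γ η t ξ p.1 r p.2)
      ((measurable_tripleIntegrand hξ).comp (measurable_fst.fst.prodMk
        (measurable_snd.prodMk measurable_fst.snd))).stronglyMeasurable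
      measurable_fst measurable_snd).aestronglyMeasurable ?_
  refine ae_restrict_of_forall_mem (measurableSet_triangle t T) fun p ⟨hts, hsu, huT⟩ => ?_
  calc ‖∫ r in p.1..p.2, tripleIntegrand γ η t ξ p.1 r p.2‖
      ≤ ∫ r in p.1..p.2, M * (r - p.1) ^ (-(2 * γ)) :=
        norm_integral_le_of_norm_le hsu (ae_of_all _ fun r hr =>
          (norm_eq_abs _).trans_le (hM _ _ _ hts hr.1.le hr.2 huT))
          ((intervalIntegrable_rpow_sub_const (by linarith) _ _ _).const_mul M)
    _ = M * ∫ x in 0..p.2 - p.1, x ^ (-(2 * γ)) := by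
        rw [intervalIntegral.integral_const_mul, integral_comp_sub_right
          (fun x => x ^ (-(2 * γ))), sub_self]
    _ ≤ M * ∫ x in 0..T - t, x ^ (-(2 * γ)) := by
        gcongr
        exact integral_rpow_le_of_subset (by linarith) le_rfl (by linarith) (by linarith)

theorem integral_tripleIntegrand_fst (hγ0 : 0 < γ) (hγ : γ < 1 / 2) {r u : ℝ} (htr : t ≤ r)
    (hru : r ≤ u) :
    ∫ s in t..r, tripleIntegrand γ η t ξ s r u =
      2 * ξ r * ξ u * (exp (η ^ 2 * ∫ v in t..r, covKernel γ r u v) - 1) := by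
  simp_rw [tripleIntegrand_eq]
  rw [intervalIntegral.integral_const_mul (2 * ξ r * ξ u), integral_mul_exp_integral htr
    ((intervalIntegrable_covKernel hγ0 hγ htr le_rfl hru).const_mul _)
    (continuousOn_const.mul ((continuousOn_covKernel hru).mono Ioo_subset_Iio_self)),
    intervalIntegral.integral_const_mul]

end Integrand

section Main

variable {γ η t T B : ℝ} {ξ ξ' : ℝ → ℝ}

theorem integral_tripleIntegrand_eq (hγ0 : 0 < γ) (hγ : γ < 1 / 2) (htT : t ≤ T)
    (hξ : Measurable ξ) (hB : ∀ x ∈ Icc t T, |ξ x| ≤ B) :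
    ∫ s in t..T, ∫ r in s..T, ∫ u in r..T, tripleIntegrand γ η t ξ s r u =
      2 * ∫ u in t..T, ξ u * ∫ r in t..u, ξ r *
        (exp (η ^ 2 * ∫ v in t..r, covKernel γ r u v) - 1) :=
  calc ∫ s in t..T, ∫ r in s..T, ∫ u in r..T, tripleIntegrand γ η t ξ s r u
      = ∫ s in t..T, ∫ u in s..T, ∫ r in s..u, tripleIntegrand γ η t ξ s r u :=
        integral_congr fun s hs => by
          rw [uIcc_of_le htT] at hs
          exact integral_integral_swap_triangle hs.2
            (integrableOn_tripleIntegrand_left hγ0 hγ hξ hB hs.1 hs.2)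
    _ = ∫ u in t..T, ∫ s in t..u, ∫ r in s..u, tripleIntegrand γ η t ξ s r u :=
        integral_integral_swap_triangle htT (integrableOn_integral_tripleIntegrand hγ0 hγ hξ hB)
    _ = ∫ u in t..T, ∫ r in t..u, ∫ s in t..r, tripleIntegrand γ η t ξ s r u :=
        integral_congr fun u hu => by
          rw [uIcc_of_le htT] at hu
          exact integral_integral_swap_triangle hu.1
            (integrableOn_tripleIntegrand_right hγ0 hγ hξ hB hu.1 hu.2)
    _ = ∫ u in t..T, ∫ r in t..u,
          2 * ξ r * ξ u * (exp (η ^ 2 * ∫ v in t..r, covKernel γ r u v) - 1) :=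
        integral_congr fun u hu => integral_congr fun r hr => by
          rw [uIcc_of_le htT] at hu
          rw [uIcc_of_le hu.1] at hr
          exact integral_tripleIntegrand_fst hγ0 hγ hr.1 hr.2
    _ = 2 * ∫ u in t..T, ξ u * ∫ r in t..u, ξ r *
          (exp (η ^ 2 * ∫ v in t..r, covKernel γ r u v) - 1) := by
        rw [← intervalIntegral.integral_const_mul 2]
        refine integral_congr fun u _ => ?_
        rw [← intervalIntegral.integral_const_mul (ξ u), ← intervalIntegral.integral_const_mul 2]
        exact integral_congr fun r _ => by ring

theorem integral_tripleIntegrand_congr (htT : t ≤ T) (h : EqOn ξ ξ' (Icc t T)) :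
    ∫ s in t..T, ∫ r in s..T, ∫ u in r..T, tripleIntegrand γ η t ξ s r u =
      ∫ s in t..T, ∫ r in s..T, ∫ u in r..T, tripleIntegrand γ η t ξ' s r u := by
  refine integral_congr fun s hs => integral_congr fun r hr => integral_congr fun u hu => ?_
  rw [uIcc_of_le htT] at hs
  have hr' := uIcc_subset_Icc hs (right_mem_Icc.2 htT) hr
  have hu' := uIcc_subset_Icc hr' (right_mem_Icc.2 htT) hu
  simp only [tripleIntegrand, h hr', h hu']

theorem integral_mul_integral_exp_covKernel_congr (htT : t ≤ T) (h : EqOn ξ ξ' (Icc t T)) :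
    ∫ u in t..T, ξ u * ∫ r in t..u, ξ r * (exp (η ^ 2 * ∫ v in t..r, covKernel γ r u v) - 1) =
      ∫ u in t..T, ξ' u * ∫ r in t..u, ξ' r *
        (exp (η ^ 2 * ∫ v in t..r, covKernel γ r u v) - 1) := by
  refine integral_congr fun u hu => ?_
  rw [uIcc_of_le htT] at hu
  refine congrArg₂ _ (h hu) (integral_congr fun r hr => ?_)
  rw [uIcc_of_le hu.1] at hr
  simp only [h ⟨hr.1, hr.2.trans hu.2⟩]

end Main

theorem MdmM_triple_integral_simplification_general
    (γ η t T : ℝ) (hγ0 : 0 < γ) (hγ : γ < 1 / 2) (htT : t < T)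
    (ξ : ℝ → ℝ) (hξcont : ContinuousOn ξ (Set.Icc t T)) :
    (∫ s in t..T, ∫ r in s..T, ∫ u in r..T,
        2 * η ^ 2 * ξ r * ξ u * (r - s) ^ (-γ) * (u - s) ^ (-γ) *
          Real.exp (η ^ 2 * ∫ v in t..s, (r - v) ^ (-γ) * (u - v) ^ (-γ)))
      = 2 * ∫ u in t..T, ξ u * ∫ r in t..u, ξ r *
          (Real.exp (η ^ 2 * ∫ v in t..r, (r - v) ^ (-γ) * (u - v) ^ (-γ)) - 1) := by
  set ξ' := IccExtend htT.le ((Icc t T).domRestrict ξ)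
  have hξξ' : EqOn ξ ξ' (Icc t T) := fun x hx => by simp [ξ', IccExtend_of_mem _ _ hx]
  obtain ⟨B, hB⟩ := isCompact_Icc.exists_bound_of_continuousOn hξcont
  change ∫ s in t..T, ∫ r in s..T, ∫ u in r..T, tripleIntegrand γ η t ξ s r u =
    2 * ∫ u in t..T, ξ u * ∫ r in t..u, ξ r * (exp (η ^ 2 * ∫ v in t..r, covKernel γ r u v) - 1)
  rw [integral_tripleIntegrand_congr htT.le hξξ',
    integral_mul_integral_exp_covKernel_congr htT.le hξξ']
  exact integral_tripleIntegrand_eq hγ0 hγ htT.le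
    (continuous_IccExtend_iff.2 hξcont.domRestrict).measurable
    fun x hx => hξξ' hx ▸ hB x hx

/-- Simplification of the triple-integral expression for `(M ⋄ M)_t(T)` (the variance
of the variance swap) in the rough Bergomi model: for `0 < γ < 1/2`, `η ≠ 0`, `t < T`
and `ξ` continuous and nonnegative on `[t, T]`,
`∫_t^T ∫_s^T ∫_r^T 2η² ξ(r) ξ(u) (r-s)^(-γ)(u-s)^(-γ)
      exp(η² ∫_t^s (r-v)^(-γ)(u-v)^(-γ) dv) du dr ds
  = 2 ∫_t^T ξ(u) ∫_t^u ξ(r) [exp(η² ∫_t^r (r-v)^(-γ)(u-v)^(-γ) dv) - 1] dr du`. -/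
theorem MdmM_triple_integral_simplification
    (γ η t T : ℝ) (hγ0 : 0 < γ) (hγ : γ < 1 / 2) (hη : η ≠ 0) (htT : t < T)
    (ξ : ℝ → ℝ) (hξcont : ContinuousOn ξ (Set.Icc t T))
    (hξnonneg : ∀ s ∈ Set.Icc t T, 0 ≤ ξ s) :
    (∫ s in t..T, ∫ r in s..T, ∫ u in r..T,
        2 * η ^ 2 * ξ r * ξ u * (r - s) ^ (-γ) * (u - s) ^ (-γ) *
          Real.exp (η ^ 2 * ∫ v in t..s, (r - v) ^ (-γ) * (u - v) ^ (-γ)))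
      = 2 * ∫ u in t..T, ξ u * ∫ r in t..u, ξ r *
          (Real.exp (η ^ 2 * ∫ v in t..r, (r - v) ^ (-γ) * (u - v) ^ (-γ)) - 1) :=
  MdmM_triple_integral_simplification_general γ η t T hγ0 hγ htT ξ hξcont
end
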